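/- Fix k ≥ 2 classes with parameters θ_1, …, θ_k in the probability simplex of ℝ^v, m ≥ 1, t > 1, a word index j and a class index i. Let x_1, …, x_n (n ≥ 1) be independent real random variables, where each document d belongs to exactly one class l(d) and Var(x_d) = m·θ_{l(d) j}·(1 − θ_{l(d) j}); let C_l be the number of documents of class l, with Σ_l C_l = n, and y_i(d) = 1 if l(d) = i and 0 otherwise. Define θ̂* := Σ_{d=1}^n (2·y_i(d) + t − 1)·x_d / (m·(2·C_i + (t − 1)·n)). Then Var(θ̂*) = [(t + 1)²·C_i·θ_{i j}(1 − θ_{i j}) + (t − 1)²·Σ_{l ≠ i} C_l·θ_{l j}(1 − θ_{l j})] / (m·(2·C_i + (t − 1)·n)²), and in particular Var(θ̂*) ≤ (t + 1)² / (4·(t − 1)²·m·n). -/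

import Mathlib

open MeasureTheory ProbabilityTheory Finset

/-- Number of documents belonging to class `l`. -/
def classCount {n k : ℕ} (lab : Fin n → Fin k) (l : Fin k) : ℕ :=
  (Finset.univ.filter fun d => lab d = l).card

/-!
The estimator is a fixed linear combination `∑ d, c_{l(d)} x_d / D` of independent variables,
so its variance is `∑ d, c_{l(d)}² Var(x_d) / D²`; grouping the documents by class gives the
exact formula, with `c_i = t + 1` and `c_l = t - 1` for `l ≠ i`. For the bound, `θ (1 - θ) ≤ 1/4`
and `(t - 1)² ≤ (t + 1)²` bound the numerator by `(t + 1)² n / 4`, while the denominator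
`2 C_i + (t - 1) n` is at least `(t - 1) n`.
-/

namespace ProbabilityTheory

variable {Ω : Type*} [MeasurableSpace Ω] {μ : Measure Ω}

theorem variance_div_const (X : Ω → ℝ) (c : ℝ) :
    variance (fun ω => X ω / c) μ = variance X μ / c ^ 2 := by
  simp only [div_eq_mul_inv, variance_mul_const, inv_pow]

theorem iIndepFun.variance_sum_const_mul {ι : Type*} {X : ι → Ω → ℝ} (hindep : iIndepFun X μ)
    (s : Finset ι) (hX : ∀ i ∈ s, MemLp (X i) 2 μ) (a : ι → ℝ) :
    variance (fun ω => ∑ i ∈ s, a i * X i ω) μ = ∑ i ∈ s, a i ^ 2 * variance (X i) μ := by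
  have hfun : (fun ω => ∑ i ∈ s, a i * X i ω) = ∑ i ∈ s, fun ω => a i * X i ω := by
    ext ω; simp
  rw [hfun, IndepFun.variance_sum (fun i hi => (hX i hi).const_mul _)
    fun i _ j _ hij => (hindep.indepFun hij).comp (measurable_const_mul _) (measurable_const_mul _)]
  exact sum_congr rfl fun i _ => variance_const_mul _ _ _

end ProbabilityTheory

theorem mul_one_sub_le_one_div_four (p : ℝ) : p * (1 - p) ≤ 1 / 4 := by
  nlinarith [sq_nonneg (p - 1 / 2)]

section ClassCount

variable {n k : ℕ} (lab : Fin n → Fin k)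

theorem sum_comp_eq_sum_classCount_mul {R : Type*} [NonAssocSemiring R] (f : Fin k → R) :
    ∑ d, f (lab d) = ∑ l, (classCount lab l : R) * f l := by
  rw [← sum_fiberwise' univ lab f]
  simp [classCount]

theorem sum_classCount : ∑ l, classCount lab l = n := by
  simpa using (sum_comp_eq_sum_classCount_mul lab fun _ => (1 : ℕ)).symm

theorem variance_sum_classwise_div {Ω : Type*} [MeasurableSpace Ω] {μ : Measure Ω}
    {x : Fin n → Ω → ℝ} (hindep : iIndepFun x μ) (hmem : ∀ d, MemLp (x d) 2 μ)
    (σsq : Fin k → ℝ) (hvar : ∀ d, variance (x d) μ = σsq (lab d)) (c : Fin k → ℝ) (D : ℝ) :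
    variance (fun ω => (∑ d, c (lab d) * x d ω) / D) μ
      = (∑ l, (classCount lab l : ℝ) * (c l ^ 2 * σsq l)) / D ^ 2 := by
  rw [variance_div_const, hindep.variance_sum_const_mul univ fun d _ => hmem d]
  simp only [hvar]
  rw [sum_comp_eq_sum_classCount_mul lab fun l => c l ^ 2 * σsq l]

theorem selfCorrected_numerator_le (i : Fin k) (p : Fin k → ℝ) {t : ℝ} (ht : 0 ≤ t) :
    (t + 1) ^ 2 * (classCount lab i : ℝ) * p i * (1 - p i)
        + (t - 1) ^ 2 * ∑ l ∈ univ.erase i, (classCount lab l : ℝ) * p l * (1 - p l)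
      ≤ (t + 1) ^ 2 / 4 * n := by
  have hclass : ∀ l, (classCount lab l : ℝ) * p l * (1 - p l) ≤ classCount lab l / 4 := by
    intro l
    rw [mul_assoc, div_eq_mul_one_div]
    exact mul_le_mul_of_nonneg_left (mul_one_sub_le_one_div_four _) (Nat.cast_nonneg _)
  have hcount : (classCount lab i : ℝ) + ∑ l ∈ univ.erase i, (classCount lab l : ℝ) = n := by
    rw [add_sum_erase univ (fun l => (classCount lab l : ℝ)) (mem_univ i)]
    exact_mod_cast sum_classCount lab
  have hsq : (t - 1) ^ 2 ≤ (t + 1) ^ 2 := by nlinarith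
  calc _ = (t + 1) ^ 2 * ((classCount lab i : ℝ) * p i * (1 - p i))
          + (t - 1) ^ 2 * ∑ l ∈ univ.erase i, (classCount lab l : ℝ) * p l * (1 - p l) := by
        ring
    _ ≤ (t + 1) ^ 2 * (classCount lab i / 4)
          + (t - 1) ^ 2 * ∑ l ∈ univ.erase i, (classCount lab l : ℝ) / 4 := by
        gcongr with l
        exacts [hclass i, hclass l]
    _ ≤ (t + 1) ^ 2 * (classCount lab i / 4)
          + (t + 1) ^ 2 * ∑ l ∈ univ.erase i, (classCount lab l : ℝ) / 4 := by
        gcongr _ + ?_ * _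
    _ = (t + 1) ^ 2 / 4 * n := by
        rw [← hcount, ← sum_div]
        ring

theorem variance_selfCorrected_eq {Ω : Type*} [MeasurableSpace Ω] {μ : Measure Ω}
    {x : Fin n → Ω → ℝ} (hindep : iIndepFun x μ) (hmem : ∀ d, MemLp (x d) 2 μ)
    {m : ℕ} (hm : m ≠ 0) (p : Fin k → ℝ)
    (hvar : ∀ d, variance (x d) μ = (m : ℝ) * p (lab d) * (1 - p (lab d))) (t : ℝ) (i : Fin k) :
    variance (fun ω =>
        (∑ d, (2 * (if lab d = i then (1 : ℝ) else 0) + t - 1) * x d ω)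
          / ((m : ℝ) * (2 * (classCount lab i : ℝ) + (t - 1) * n))) μ
      = ((t + 1) ^ 2 * (classCount lab i : ℝ) * p i * (1 - p i)
          + (t - 1) ^ 2 * ∑ l ∈ univ.erase i, (classCount lab l : ℝ) * p l * (1 - p l))
        / ((m : ℝ) * (2 * (classCount lab i : ℝ) + (t - 1) * n) ^ 2) := by
  have hsplit : ∑ l, (classCount lab l : ℝ) * ((2 * (if l = i then (1 : ℝ) else 0) + t - 1) ^ 2
        * (m * p l * (1 - p l)))
      = m * ((t + 1) ^ 2 * (classCount lab i : ℝ) * p i * (1 - p i)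
          + (t - 1) ^ 2 * ∑ l ∈ univ.erase i, (classCount lab l : ℝ) * p l * (1 - p l)) := by
    rw [← add_sum_erase _ _ (mem_univ i), mul_add, mul_sum, mul_sum]
    congr 1
    · rw [if_pos rfl]; ring
    · refine sum_congr rfl fun l hl => ?_
      rw [if_neg (ne_of_mem_erase hl)]
      ring
  rw [variance_sum_classwise_div lab hindep hmem (fun l => (m : ℝ) * p l * (1 - p l)) hvar
    (fun l => 2 * (if l = i then (1 : ℝ) else 0) + t - 1), hsplit]
  field_simp

end ClassCount

theorem self_corrected_estimator_variance_general {Ω : Type*} [MeasurableSpace Ω]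
    (μ : Measure Ω)
    {k v : ℕ}
    (θ : Fin k → Fin v → ℝ)
    (m : ℕ) (hm : 1 ≤ m) (t : ℝ) (ht : 1 < t) (j : Fin v) (i : Fin k)
    (n : ℕ) (hn : 1 ≤ n) (x : Fin n → Ω → ℝ) (lab : Fin n → Fin k)
    (hindep : iIndepFun x μ)
    (hmem : ∀ d, MemLp (x d) 2 μ)
    (hvar : ∀ d, variance (x d) μ = (m : ℝ) * θ (lab d) j * (1 - θ (lab d) j)) :
    variance (fun ω =>
        (∑ d, (2 * (if lab d = i then (1 : ℝ) else 0) + t - 1) * x d ω)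
          / ((m : ℝ) * (2 * (classCount lab i : ℝ) + (t - 1) * n))) μ
      = ((t + 1) ^ 2 * (classCount lab i : ℝ) * θ i j * (1 - θ i j)
          + (t - 1) ^ 2 * ∑ l ∈ Finset.univ.erase i,
              (classCount lab l : ℝ) * θ l j * (1 - θ l j))
        / ((m : ℝ) * (2 * (classCount lab i : ℝ) + (t - 1) * n) ^ 2) ∧
    variance (fun ω =>
        (∑ d, (2 * (if lab d = i then (1 : ℝ) else 0) + t - 1) * x d ω)
          / ((m : ℝ) * (2 * (classCount lab i : ℝ) + (t - 1) * n))) μ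
      ≤ (t + 1) ^ 2 / (4 * (t - 1) ^ 2 * (m : ℝ) * n) := by
  have hm0 : (0 : ℝ) < m := by exact_mod_cast hm
  have hn0 : (0 : ℝ) < n := by exact_mod_cast hn
  have ht0 : 0 < t - 1 := by linarith
  rw [variance_selfCorrected_eq lab hindep hmem (by omega) (fun l => θ l j) hvar]
  refine ⟨rfl, ?_⟩
  calc _ ≤ (t + 1) ^ 2 / 4 * n / (m * ((t - 1) * n) ^ 2) := by
        gcongr
        · exact selfCorrected_numerator_le lab i (fun l => θ l j) (by linarith)
        · exact le_add_of_nonneg_left (by positivity)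
    _ = (t + 1) ^ 2 / (4 * (t - 1) ^ 2 * m * n) := by
        field_simp

/-- Variance of the self-corrected estimator (Corollary 1, variance part).
Each document `d` belongs to exactly one class `lab d` with
`Var(x d) = m θ_{lab d, j} (1 - θ_{lab d, j})`; `C_l` counts the documents of
class `l` and `y_i(d)` indicates `lab d = i`. The estimator
`θ̂* = ∑ d, (2 y_i(d) + t - 1) x d / (m (2 C_i + (t - 1) n))` satisfies
`Var(θ̂*) = ((t+1)² C_i θ_{i j}(1-θ_{i j}) + (t-1)² ∑_{l≠i} C_l θ_{l j}(1-θ_{l j}))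
  / (m (2 C_i + (t-1) n)²)` and in particular
`Var(θ̂*) ≤ (t+1)² / (4 (t-1)² m n)`. -/
theorem self_corrected_estimator_variance {Ω : Type*} [MeasurableSpace Ω]
    (μ : Measure Ω) [IsProbabilityMeasure μ]
    {k v : ℕ} (hk : 2 ≤ k)
    (θ : Fin k → Fin v → ℝ)
    (hθ0 : ∀ l j', 0 ≤ θ l j') (hθ1 : ∀ l, ∑ j', θ l j' = 1)
    (m : ℕ) (hm : 1 ≤ m) (t : ℝ) (ht : 1 < t) (j : Fin v) (i : Fin k)
    (n : ℕ) (hn : 1 ≤ n) (x : Fin n → Ω → ℝ) (lab : Fin n → Fin k)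
    (hindep : iIndepFun x μ)
    (hmem : ∀ d, MemLp (x d) 2 μ)
    (hvar : ∀ d, variance (x d) μ = (m : ℝ) * θ (lab d) j * (1 - θ (lab d) j)) :
    variance (fun ω =>
        (∑ d, (2 * (if lab d = i then (1 : ℝ) else 0) + t - 1) * x d ω)
          / ((m : ℝ) * (2 * (classCount lab i : ℝ) + (t - 1) * n))) μ
      = ((t + 1) ^ 2 * (classCount lab i : ℝ) * θ i j * (1 - θ i j)
          + (t - 1) ^ 2 * ∑ l ∈ Finset.univ.erase i,
              (classCount lab l : ℝ) * θ l j * (1 - θ l j))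
        / ((m : ℝ) * (2 * (classCount lab i : ℝ) + (t - 1) * n) ^ 2) ∧
    variance (fun ω =>
        (∑ d, (2 * (if lab d = i then (1 : ℝ) else 0) + t - 1) * x d ω)
          / ((m : ℝ) * (2 * (classCount lab i : ℝ) + (t - 1) * n))) μ
      ≤ (t + 1) ^ 2 / (4 * (t - 1) ^ 2 * (m : ℝ) * n) :=
  self_corrected_estimator_variance_general μ θ m hm t ht j i n hn x lab hindep hmem hvar
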